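/- In an undirected k-tree with layer decomposition as above with t in layer 0, the greedy path that starts at s and at each step moves to a neighbor of the current vertex in the lowest possible layer until reaching layer 0 (then moves to t) is a shortest s–t path. -/
import Mathlib


/-- The edge set of a complete graph on the vertex set `V`. -/
def cliqueEdges (V : Finset ℕ) : Finset (Sym2 ℕ) :=
  ((V ×ˢ V).filter (fun p => p.1 ≠ p.2)).image (fun p => s(p.1, p.2))

/-- `X` is a clique with respect to the edge set `E`. -/
def IsCliqueIn (E : Finset (Sym2 ℕ)) (X : Finset ℕ) : Prop :=
  ∀ x ∈ X, ∀ y ∈ X, x ≠ y → s(x, y) ∈ E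

/-- Inductive definition of a `k`-tree with vertex set `V` and edge set `E`:
a `k`-clique is a `k`-tree, and one may add a new vertex joined to all
vertices of an existing `k`-clique (the support). -/
inductive IsKTree (k : ℕ) : Finset ℕ → Finset (Sym2 ℕ) → Prop where
  | base (V : Finset ℕ) (h : V.card = k) : IsKTree k V (cliqueEdges V)
  | extend (V : Finset ℕ) (E : Finset (Sym2 ℕ)) (X : Finset ℕ) (v : ℕ)
      (ht : IsKTree k V E) (hXV : X ⊆ V) (hX : X.card = k)
      (hclique : IsCliqueIn E X) (hv : v ∉ V) :
      IsKTree k (insert v V) (E ∪ X.image (fun x => s(x, v)))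

/-- A layer decomposition of the (undirected) graph `(V, E)` with respect to
the target vertex `t`: layer `0` is a `k`-clique containing `t`; each vertex
in a layer `i > 0` has exactly `k` neighbours in strictly lower layers, and
these form a `k`-clique; no two vertices in the same layer are adjacent. -/
def LayerDecomp (k : ℕ) (V : Finset ℕ) (E : Finset (Sym2 ℕ))
    (layer : ℕ → ℕ) (t : ℕ) : Prop :=
  t ∈ V ∧ layer t = 0 ∧
  (V.filter (fun v => layer v = 0)).card = k ∧
  IsCliqueIn E (V.filter (fun v => layer v = 0)) ∧
  (∀ v ∈ V, 0 < layer v →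
    (V.filter (fun u => s(u, v) ∈ E ∧ layer u < layer v)).card = k ∧
    IsCliqueIn E (V.filter (fun u => s(u, v) ∈ E ∧ layer u < layer v))) ∧
  (∀ u ∈ V, ∀ v ∈ V, s(u, v) ∈ E → layer u ≠ layer v)

/-- A walk from `s` to `t` in the graph `(V, E)`, as a list of vertices. -/
def IsWalk (V : Finset ℕ) (E : Finset (Sym2 ℕ)) (s t : ℕ) (p : List ℕ) : Prop :=
  p.head? = some s ∧ p.getLast? = some t ∧ (∀ v ∈ p, v ∈ V) ∧
  p.Chain' (fun a b => s(a, b) ∈ E)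

/-- A shortest path from `s` to `t`: a walk of minimum length. -/
def IsShortestPath (V : Finset ℕ) (E : Finset (Sym2 ℕ)) (s t : ℕ)
    (p : List ℕ) : Prop :=
  IsWalk V E s t p ∧ ∀ q : List ℕ, IsWalk V E s t q → p.length ≤ q.length

/-- The greedy path from `s` to `t`: at every step, while the current vertex
lies in a positive layer, move to a neighbour in the lowest possible layer;
upon reaching layer `0`, move to `t`. -/
def IsGreedyPath (V : Finset ℕ) (E : Finset (Sym2 ℕ)) (layer : ℕ → ℕ)
    (s t : ℕ) (p : List ℕ) : Prop :=
  IsWalk V E s t p ∧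
  ∀ i : ℕ, (hi : i + 1 < p.length) →
    (0 < layer (p.get ⟨i, by omega⟩) →
      ∀ u ∈ V, s(p.get ⟨i, by omega⟩, u) ∈ E →
        layer (p.get ⟨i + 1, hi⟩) ≤ layer u) ∧
    (layer (p.get ⟨i, by omega⟩) = 0 → p.get ⟨i + 1, hi⟩ = t)

namespace GreedyAux

/-- The lower neighbourhood of `v`. -/
def lowNbrs (V : Finset ℕ) (E : Finset (Sym2 ℕ)) (layer : ℕ → ℕ) (v : ℕ) : Finset ℕ :=
  V.filter (fun u => s(u, v) ∈ E ∧ layer u < layer v)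

/-- The greedy step: the neighbour of `v` of minimal layer. -/
def gstep (V : Finset ℕ) (E : Finset (Sym2 ℕ)) (layer : ℕ → ℕ) (v : ℕ) : ℕ :=
  let S := (lowNbrs V E layer v).filter
    (fun u => ∀ w ∈ lowNbrs V E layer v, layer u ≤ layer w)
  if h : S.Nonempty then S.min' h else 0

/-- The greedy distance to `t`, with fuel. -/
def Dfuel (V : Finset ℕ) (E : Finset (Sym2 ℕ)) (layer : ℕ → ℕ) (t : ℕ) : ℕ → ℕ → ℕ
  | 0, v => if v = t then 0 else 1
  | n+1, v => if layer v = 0 then (if v = t then 0 else 1)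
              else Dfuel V E layer t n (gstep V E layer v) + 1

/-- The greedy distance to `t`. -/
def D (V : Finset ℕ) (E : Finset (Sym2 ℕ)) (layer : ℕ → ℕ) (t : ℕ) (v : ℕ) : ℕ :=
  Dfuel V E layer t (layer v) v

variable {k : ℕ} {V : Finset ℕ} {E : Finset (Sym2 ℕ)} {layer : ℕ → ℕ} {t : ℕ}

lemma gstep_spec (hlay : LayerDecomp k V E layer t) {v : ℕ} (hv : v ∈ V)
    (h0 : 0 < layer v) :
    gstep V E layer v ∈ lowNbrs V E layer v ∧
      ∀ w ∈ lowNbrs V E layer v, layer (gstep V E layer v) ≤ layer w := by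
  obtain ⟨ht, hlt, hcard0, hclq0, hup, hdiff⟩ := hlay
  have hScard : (lowNbrs V E layer v).card = k := (hup v hv h0).1
  have hk : 0 < k := by
    rw [← hcard0]
    exact Finset.card_pos.mpr ⟨t, Finset.mem_filter.mpr ⟨ht, hlt⟩⟩
  have hSne : (lowNbrs V E layer v).Nonempty := Finset.card_pos.mp (by omega)
  obtain ⟨u, hu, hmin⟩ := Finset.exists_min_image (lowNbrs V E layer v) layer hSne
  have hS' : ((lowNbrs V E layer v).filter
      (fun u => ∀ w ∈ lowNbrs V E layer v, layer u ≤ layer w)).Nonempty :=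
    ⟨u, Finset.mem_filter.mpr ⟨hu, hmin⟩⟩
  have hgs : gstep V E layer v ∈ (lowNbrs V E layer v).filter
      (fun u => ∀ w ∈ lowNbrs V E layer v, layer u ≤ layer w) := by
    rw [gstep]
    simp only [dif_pos hS']
    exact Finset.min'_mem _ hS'
  have := Finset.mem_filter.mp hgs
  exact ⟨this.1, this.2⟩

lemma gstep_eq (hlay : LayerDecomp k V E layer t) {v : ℕ} (hv : v ∈ V)
    (h0 : 0 < layer v) {b : ℕ} (hb : b ∈ lowNbrs V E layer v)
    (hble : layer b ≤ layer (gstep V E layer v)) : b = gstep V E layer v := by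
  have hg := gstep_spec hlay hv h0
  by_contra hne
  obtain ⟨ht, hlt, hcard0, hclq0, hup, hdiff⟩ := hlay
  have hedge : s(b, gstep V E layer v) ∈ E := (hup v hv h0).2 b hb _ hg.1 hne
  have hbV : b ∈ V := (Finset.mem_filter.mp hb).1
  have hgV : gstep V E layer v ∈ V := (Finset.mem_filter.mp hg.1).1
  have hneq := hdiff b hbV (gstep V E layer v) hgV hedge
  have := hg.2 b hb
  omega

lemma gstep_lt (hlay : LayerDecomp k V E layer t) {v : ℕ} (hv : v ∈ V)
    (h0 : 0 < layer v) :
    gstep V E layer v ∈ V ∧ s(gstep V E layer v, v) ∈ E ∧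
      layer (gstep V E layer v) < layer v := by
  have hg := (gstep_spec hlay hv h0).1
  have := Finset.mem_filter.mp hg
  exact ⟨this.1, this.2.1, this.2.2⟩

lemma Dfuel_stable (hlay : LayerDecomp k V E layer t) :
    ∀ n m v, v ∈ V → layer v ≤ n → layer v ≤ m →
      Dfuel V E layer t n v = Dfuel V E layer t m v := by
  intro n
  induction n with
  | zero =>
    intro m v hv hn hm
    have h0 : layer v = 0 := by omega
    cases m with
    | zero => rfl
    | succ m => simp [Dfuel, h0]
  | succ n ih =>
    intro m v hv hn hm
    by_cases h0 : layer v = 0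
    · cases m with
      | zero => simp [Dfuel, h0]
      | succ m => simp [Dfuel, h0]
    · have h0' : 0 < layer v := Nat.pos_of_ne_zero h0
      cases m with
      | zero => omega
      | succ m =>
        have hg := gstep_lt hlay hv h0'
        simp only [Dfuel, if_neg h0]
        rw [ih m (gstep V E layer v) hg.1 (by omega) (by omega)]

lemma D_t (hlay : LayerDecomp k V E layer t) : D V E layer t t = 0 := by
  have h0 : layer t = 0 := hlay.2.1
  simp [D, h0, Dfuel]

lemma D_zero {v : ℕ} (h0 : layer v = 0) (hvt : v ≠ t) : D V E layer t v = 1 := by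
  simp [D, h0, Dfuel, hvt]

lemma D_pos (hlay : LayerDecomp k V E layer t) {v : ℕ} (hv : v ∈ V)
    (h0 : 0 < layer v) :
    D V E layer t v = D V E layer t (gstep V E layer v) + 1 := by
  obtain ⟨n, hn⟩ : ∃ n, layer v = n + 1 := ⟨layer v - 1, by omega⟩
  have hg := gstep_lt hlay hv h0
  rw [D, hn]
  simp only [Dfuel, if_neg (by omega : ¬ layer v = 0)]
  rw [Dfuel_stable hlay n (layer (gstep V E layer v)) (gstep V E layer v) hg.1
    (by omega) (le_refl _)]
  rfl

lemma pair (hlay : LayerDecomp k V E layer t) :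
    ∀ n u v, u ∈ V → v ∈ V → s(u, v) ∈ E → layer u < layer v → layer v ≤ n →
      D V E layer t u ≤ D V E layer t v ∧
        D V E layer t v ≤ D V E layer t u + 1 := by
  intro n
  induction n with
  | zero => intro u v _ _ _ h1 h2; omega
  | succ n ih =>
    intro u v hu hv he hlt hle
    have h0 : 0 < layer v := by omega
    have hg := gstep_lt hlay hv h0
    have hgmin := (gstep_spec hlay hv h0).2
    have huS : u ∈ lowNbrs V E layer v := Finset.mem_filter.mpr ⟨hu, he, hlt⟩
    have hDv : D V E layer t v = D V E layer t (gstep V E layer v) + 1 :=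
      D_pos hlay hv h0
    by_cases hug : u = gstep V E layer v
    · rw [← hug] at hDv; omega
    · have hedge : s(gstep V E layer v, u) ∈ E := by
        have := (hlay.2.2.2.2.1 v hv h0).2 _ (gstep_spec hlay hv h0).1 u huS
          (fun h => hug h.symm)
        exact this
      have hgle : layer (gstep V E layer v) ≤ layer u := hgmin u huS
      have hgne : layer (gstep V E layer v) ≠ layer u :=
        hlay.2.2.2.2.2 _ hg.1 u hu hedge
      have hih := ih (gstep V E layer v) u hg.1 hu hedge (by omega) (by omega)
      omega

lemma walk_lb (hlay : LayerDecomp k V E layer t) :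
    ∀ (q : List ℕ) (a : ℕ), q.head? = some a → q.getLast? = some t →
      (∀ v ∈ q, v ∈ V) → q.Chain' (fun x y => s(x, y) ∈ E) →
      D V E layer t a + 1 ≤ q.length := by
  intro q
  induction q with
  | nil => intro a h; simp at h
  | cons b r ih =>
    intro a hhead hlast hmem hchain
    have hab : a = b := by simpa using hhead.symm
    subst hab
    cases r with
    | nil =>
      have hat : a = t := by simpa using hlast
      subst hat
      simp [D_t hlay]
    | cons c r' =>
      have hedge : s(a, c) ∈ E := (List.isChain_cons_cons.mp hchain).1
      have haV : a ∈ V := hmem a (by simp)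
      have hcV : c ∈ V := hmem c (by simp)
      have hneq : layer a ≠ layer c := hlay.2.2.2.2.2 a haV c hcV hedge
      have hlip : D V E layer t a ≤ D V E layer t c + 1 := by
        rcases Nat.lt_or_ge (layer a) (layer c) with h | h
        · exact le_trans (pair hlay (layer c) a c haV hcV hedge h (le_refl _)).1
            (Nat.le_succ _)
        · have h' : layer c < layer a := by omega
          have hedge' : s(c, a) ∈ E := by rwa [Sym2.eq_swap] at hedge
          exact (pair hlay (layer a) c a hcV haV hedge' h' (le_refl _)).2
      have htail := ih c rfl (by rw [← hlast]; simp [List.getLast?_cons_cons])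
        (fun v hv => hmem v (by simp [hv])) (List.isChain_cons_cons.mp hchain).2
      simp only [List.length_cons] at htail ⊢
      omega

lemma greedy_len (hlay : LayerDecomp k V E layer t) :
    ∀ (p : List ℕ) (a : ℕ), p.head? = some a → p.getLast? = some t →
      (∀ v ∈ p, v ∈ V) → p.Chain' (fun x y => s(x, y) ∈ E) →
      (∀ i (hi : i + 1 < p.length),
        (0 < layer (p[i]'(by omega)) →
          ∀ u ∈ V, s(p[i]'(by omega), u) ∈ E → layer (p[i+1]'hi) ≤ layer u) ∧
        (layer (p[i]'(by omega)) = 0 → p[i+1]'hi = t)) →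
      p.length = D V E layer t a + 1 := by
  intro p
  induction p with
  | nil => intro a h; simp at h
  | cons b r ih =>
    intro a hhead hlast hmem hchain hgp
    have hab : a = b := by simpa using hhead.symm
    subst hab
    cases r with
    | nil =>
      have hat : a = t := by simpa using hlast
      subst hat
      simp [D_t hlay]
    | cons c r' =>
      have hedge : s(a, c) ∈ E := (List.isChain_cons_cons.mp hchain).1
      have haV : a ∈ V := hmem a (by simp)
      have hcV : c ∈ V := hmem c (by simp)
      have hgp0 := hgp 0 (by simp)
      simp only [List.getElem_cons_zero, List.getElem_cons_succ] at hgp0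
      by_cases hb0 : layer a = 0
      · have hct : c = t := hgp0.2 hb0
        have hat : a ≠ t := by
          intro h
          exact hlay.2.2.2.2.2 a haV c hcV hedge (by rw [h, hct])
        cases r' with
        | nil => simp [D_zero hb0 hat]
        | cons d r'' =>
          exfalso
          have hgp1 := hgp 1 (by simp)
          simp only [List.getElem_cons_succ, List.getElem_cons_zero] at hgp1
          have hdt : d = t := hgp1.2 (by rw [hct]; exact hlay.2.1)
          have hedge2 : s(c, d) ∈ E :=
            (List.isChain_cons_cons.mp (List.isChain_cons_cons.mp hchain).2).1
          exact hlay.2.2.2.2.2 c hcV d (hmem d (by simp)) hedge2 (by rw [hct, hdt])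
      · have hb0' : 0 < layer a := Nat.pos_of_ne_zero hb0
        have hg := gstep_lt hlay haV hb0'
        have hcle : layer c ≤ layer (gstep V E layer a) := by
          apply hgp0.1 hb0' _ hg.1
          rw [Sym2.eq_swap]; exact hg.2.1
        have hcS : c ∈ lowNbrs V E layer a := by
          refine Finset.mem_filter.mpr ⟨hcV, ?_, ?_⟩
          · rwa [Sym2.eq_swap]
          · omega
        have hceq : c = gstep V E layer a := gstep_eq hlay haV hb0' hcS hcle
        have hDa : D V E layer t a = D V E layer t c + 1 := by
          rw [D_pos hlay haV hb0', ← hceq]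
        have htail := ih c rfl (by rw [← hlast]; simp [List.getLast?_cons_cons])
          (fun v hv => hmem v (by simp [hv])) (List.isChain_cons_cons.mp hchain).2
          (fun i hi => by
            have := hgp (i + 1) (by simpa using Nat.succ_lt_succ hi)
            simpa using this)
        simp only [List.length_cons] at htail ⊢
        omega

end GreedyAux

/-- In a layered `k`-tree with `t` in layer `0`, the greedy path that always
moves to a neighbour in the lowest possible layer until reaching layer `0`
(and then moves to `t`) is a shortest `s`–`t` path. -/
theorem greedy_path_is_shortest (k : ℕ) (V : Finset ℕ)
    (E : Finset (Sym2 ℕ)) (h : IsKTree k V E)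
    (layer : ℕ → ℕ) (t : ℕ) (hlay : LayerDecomp k V E layer t)
    (s : ℕ) (hs : s ∈ V) (p : List ℕ)
    (hp : IsGreedyPath V E layer s t p) :
    IsShortestPath V E s t p := by
  obtain ⟨hwalk, hgp⟩ := hp
  refine ⟨hwalk, fun q hq => ?_⟩
  obtain ⟨hh, hl, hm, hc⟩ := hwalk
  have hgp' : ∀ i (hi : i + 1 < p.length),
      (0 < layer (p[i]'(by omega)) →
        ∀ u ∈ V, s(p[i]'(by omega), u) ∈ E → layer (p[i+1]'hi) ≤ layer u) ∧
      (layer (p[i]'(by omega)) = 0 → p[i+1]'hi = t) := by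
    intro i hi
    have := hgp i hi
    simpa [List.get_eq_getElem] using this
  have hlen := GreedyAux.greedy_len hlay p s hh hl hm hc hgp'
  obtain ⟨qh, ql, qm, qc⟩ := hq
  have hlb := GreedyAux.walk_lb hlay q s qh ql qm qc
  omega
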